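/- Let f : ℝⁿ → ℝ be twice continuously differentiable with ∇²f Lipschitz continuous with constant L_H in the operator norm. Let εg ∈ (0, 1), set εH = εg^{1/2} and μ = εg/4, and let ζ̄ ∈ (0, 1), ζ_r ∈ (0, 1), and β ∈ [εH, 1). Let x ∈ ℝⁿ with x > 0 componentwise and let d ∈ ℝⁿ satisfy ‖X⁻¹X̄d‖∞ < β. Define the residual r̂ = (X̄(∇²f(x) + μX⁻²)X̄ + 2εH·I)d + X̄(∇f(x) − μX⁻¹e), and suppose that ‖r̂‖∞ ≤ ζ̄μ and ‖r̂‖ ≤ (ζ_r εH/2)‖d‖. Let x⁺ = x + X̄d and let c_d = min{(1 − ζ̄)/9, (3/(2L_H))^{1/2}, 1/(2(L_H + 9/2 + ζ_r))}. Then either ‖d‖ ≥ c_d·εH, or both ∇f(x⁺) ≥ −εg·e componentwise and ‖X̄⁺∇f(x⁺)‖∞ ≤ εg, where X̄⁺ = diag(min(x⁺₁,1),…,min(x⁺ₙ,1)). -/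

import Mathlib

open Matrix

/-- The Euclidean norm of a vector in `Fin n → ℝ`. -/
noncomputable def euclNorm {n : ℕ} (v : Fin n → ℝ) : ℝ := Real.sqrt (∑ i, (v i)^2)

/-- The operator norm (induced by the Euclidean norm) of a matrix. -/
noncomputable def opNorm {n : ℕ} (A : Matrix (Fin n) (Fin n) ℝ) : ℝ :=
  ‖Matrix.toEuclideanCLM (𝕜 := ℝ) A‖

/-- The continuous linear map `w ↦ ∑ i, v i * w i`. -/
noncomputable def dotCLM {n : ℕ} (v : Fin n → ℝ) : (Fin n → ℝ) →L[ℝ] ℝ :=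
  ∑ i, v i • (ContinuousLinearMap.proj i : (Fin n → ℝ) →L[ℝ] ℝ)

/-- The continuous linear map `w ↦ A *ᵥ w`. -/
noncomputable def mulVecCLM {n : ℕ} (A : Matrix (Fin n) (Fin n) ℝ) :
    (Fin n → ℝ) →L[ℝ] (Fin n → ℝ) :=
  LinearMap.toContinuousLinearMap A.mulVecLin

/-!
On the branch `‖d‖ < c_d εH` the step is small and the claim is a coordinatewise estimate.
Put `s = X̄d` and `e = ∇f(x + s) - ∇f(x) - ∇²f(x)s`, so that `‖e‖ ≤ L_H‖s‖²` by the mean value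
inequality. Unfolding `r̂`, with `w = x̄ᵢ`,

  `w ∇ᵢf(x⁺) = μ (w/xᵢ)(1 - (w/xᵢ)dᵢ) + (r̂ᵢ - 2εH dᵢ) + w eᵢ`.

Since `εH² = 4μ`, `‖r̂‖ ≤ (ζ_r εH/2)‖d‖` and `c_d (2L_H + 9 + 2ζ_r) ≤ 1`, the last two terms
are at most `(1 - c_d)μ` in absolute value, while `|dᵢ| ≤ c_d ≤ 1`. So the barrier term decides
the sign: it lies in `[(1 - c_d)μ, (1 + c_d)μ]` when `xᵢ ≤ 1`, giving `∇ᵢf(x⁺) ≥ 0` and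
`x⁺ᵢ ∇ᵢf(x⁺) ≤ (1 + dᵢ)·2μ`, and in `[0, 2μ]` when `xᵢ > 1`, giving `-μ ≤ ∇ᵢf(x⁺) ≤ 4μ`.
Finally `4μ = εg`.
-/

section Taylor

variable {E F : Type*} [NormedAddCommGroup E] [NormedSpace ℝ E]
  [NormedAddCommGroup F] [NormedSpace ℝ F]

theorem norm_image_add_sub_sub_fderiv_le {f : E → F} {f' : E → E →L[ℝ] F}
    (hf : ∀ y, HasFDerivAt f (f' y) y) {L : ℝ} (hf' : ∀ y z, ‖f' y - f' z‖ ≤ L * ‖y - z‖)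
    (x s : E) : ‖f (x + s) - f x - f' x s‖ ≤ L * ‖s‖ ^ 2 := by
  rcases eq_or_ne s 0 with rfl | hs
  · simp
  have hL : 0 ≤ L := by
    have := (norm_nonneg _).trans (hf' (x + s) x)
    rw [add_sub_cancel_left] at this
    exact nonneg_of_mul_nonneg_left this (norm_pos_iff.mpr hs)
  have key := (convex_segment x (x + s)).norm_image_sub_le_of_norm_hasFDerivWithin_le'
    (fun y _ => (hf y).hasFDerivWithinAt) (C := L * ‖s‖) (φ := f' x) ?_
    (left_mem_segment ℝ x (x + s)) (right_mem_segment ℝ x (x + s))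
  · simpa [sq, mul_assoc] using key
  intro y hy
  calc ‖f' y - f' x‖ ≤ L * ‖y - x‖ := hf' y x
    _ ≤ L * ‖s‖ := by
      gcongr
      simpa using norm_sub_le_of_mem_segment hy

end Taylor

section EuclNorm

variable {n : ℕ}

theorem euclNorm_eq_norm_toLp (v : Fin n → ℝ) :
    euclNorm v = ‖(WithLp.toLp 2 v : EuclideanSpace ℝ (Fin n))‖ := by
  simp [euclNorm, EuclideanSpace.norm_eq]

theorem euclNorm_nonneg (v : Fin n → ℝ) : 0 ≤ euclNorm v := Real.sqrt_nonneg _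

theorem abs_le_euclNorm (v : Fin n → ℝ) (i : Fin n) : |v i| ≤ euclNorm v := by
  simpa [euclNorm_eq_norm_toLp] using
    PiLp.norm_apply_le (WithLp.toLp 2 v : EuclideanSpace ℝ (Fin n)) i

theorem euclNorm_le_euclNorm {v w : Fin n → ℝ} (h : ∀ i, |v i| ≤ |w i|) :
    euclNorm v ≤ euclNorm w :=
  Real.sqrt_le_sqrt (Finset.sum_le_sum fun i _ => sq_le_sq.mpr (h i))

theorem euclNorm_mul_le_of_abs_le_one {w v : Fin n → ℝ} (hw : ∀ i, |w i| ≤ 1) :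
    euclNorm (fun i => w i * v i) ≤ euclNorm v :=
  euclNorm_le_euclNorm fun i => by
    rw [abs_mul]
    exact mul_le_of_le_one_left (abs_nonneg _) (hw i)

theorem euclNorm_sub_sub_mulVec_le {g : (Fin n → ℝ) → Fin n → ℝ}
    {H : (Fin n → ℝ) → Matrix (Fin n) (Fin n) ℝ} (hg : ∀ y, HasFDerivAt g (mulVecCLM (H y)) y)
    {L : ℝ} (hH : ∀ y z, opNorm (H y - H z) ≤ L * euclNorm (y - z)) (x s : Fin n → ℝ) :
    euclNorm (g (x + s) - g x - H x *ᵥ s) ≤ L * euclNorm s ^ 2 := by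
  let e := EuclideanSpace.equiv (Fin n) ℝ
  have hG : ∀ y, HasFDerivAt (e.symm ∘ g ∘ e) (Matrix.toEuclideanCLM (𝕜 := ℝ) (H (e y))) y :=
    fun y => e.symm.hasFDerivAt.comp y ((hg (e y)).comp y e.hasFDerivAt)
  have hG' : ∀ y z, ‖Matrix.toEuclideanCLM (𝕜 := ℝ) (H (e y)) -
      Matrix.toEuclideanCLM (𝕜 := ℝ) (H (e z))‖ ≤ L * ‖y - z‖ := fun y z => by
    simpa [opNorm, euclNorm_eq_norm_toLp, e, PiLp.coe_continuousLinearEquiv] using hH (e y) (e z)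
  simpa [euclNorm_eq_norm_toLp, e, PiLp.coe_continuousLinearEquiv,
      PiLp.coe_symm_continuousLinearEquiv] using
    norm_image_add_sub_sub_fderiv_le hG hG' (e.symm x) (e.symm s)

end EuclNorm

theorem residual_apply {n : ℕ} (H : Matrix (Fin n) (Fin n) ℝ) (w x g d : Fin n → ℝ) (μ ε : ℝ)
    (i : Fin n) :
    ((Matrix.diagonal w * (H + μ • Matrix.diagonal (fun i => ((x i)^2)⁻¹)) * Matrix.diagonal w
        + (2 * ε) • (1 : Matrix (Fin n) (Fin n) ℝ)) *ᵥ d + (fun i => w i * (g i - μ / x i))) i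
      = w i * (g i + (H *ᵥ fun j => w j * d j) i) - μ * (w i / x i) * (1 - w i / x i * d i)
        + 2 * ε * d i := by
  have hw : Matrix.diagonal w *ᵥ d = fun j => w j * d j := by
    funext j; exact Matrix.mulVec_diagonal w d j
  simp only [Matrix.add_mulVec, ← Matrix.mulVec_mulVec, hw, Matrix.smul_mulVec,
    Matrix.one_mulVec, Pi.add_apply, Pi.smul_apply, Matrix.mulVec_diagonal, smul_eq_mul]
  ring

section CoordinateBound

variable {μ c X a ρ E g : ℝ}

theorem coord_bound_of_le_one (hμ : 0 ≤ μ) (hX : 0 < X) (hX1 : X ≤ 1) (hc : c ≤ 1)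
    (ha : |a| ≤ c) (hρE : |ρ| + |E| ≤ (1 - c) * μ) (hg : X * g = μ * (1 - a) + ρ + X * E) :
    0 ≤ g ∧ |min (X + X * a) 1 * g| ≤ 4 * μ := by
  obtain ⟨ha₁, ha₂⟩ := abs_le.mp ha
  have hXE : |X * E| ≤ |E| := by
    rw [abs_mul, abs_of_pos hX]
    exact mul_le_of_le_one_left (abs_nonneg E) hX1
  have hXg₀ : 0 ≤ X * g := by
    rw [hg]
    nlinarith [neg_abs_le ρ, neg_abs_le (X * E)]
  have hXg₂ : X * g ≤ 2 * μ := by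
    rw [hg]
    nlinarith [le_abs_self ρ, le_abs_self (X * E)]
  have hg₀ : 0 ≤ g := (mul_nonneg_iff_of_pos_left hX).mp hXg₀
  have hxp : 0 ≤ X + X * a := by nlinarith
  refine ⟨hg₀, ?_⟩
  rw [abs_of_nonneg (mul_nonneg (le_min hxp zero_le_one) hg₀)]
  calc min (X + X * a) 1 * g ≤ (X + X * a) * g := by gcongr; exact min_le_left _ _
    _ = (1 + a) * (X * g) := by ring
    _ ≤ 2 * (2 * μ) := by gcongr; linarith
    _ = 4 * μ := by ring

theorem coord_bound_of_one_lt (hμ : 0 ≤ μ) (hX1 : 1 < X) (hc : c ≤ 1)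
    (ha : |a| ≤ c) (hρE : |ρ| + |E| ≤ (1 - c) * μ) (hg : g = μ / X * (1 - a / X) + ρ + E) :
    -μ ≤ g ∧ |min (X + a) 1 * g| ≤ 4 * μ := by
  have hX : 0 < X := by linarith
  have hμX : μ / X ≤ μ := div_le_self hμ hX1.le
  have haX : |a / X| ≤ c := by
    rw [abs_div, abs_of_pos hX]
    exact (div_le_self (abs_nonneg a) hX1.le).trans ha
  obtain ⟨haX₁, haX₂⟩ := abs_le.mp haX
  have hμX₀ : 0 ≤ μ / X := div_nonneg hμ hX.le
  have hbarrier₀ : 0 ≤ μ / X * (1 - a / X) := by nlinarith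
  have hbarrier₂ : μ / X * (1 - a / X) ≤ 2 * μ := by nlinarith
  have hg₁ : -μ ≤ g := by
    rw [hg]
    nlinarith [neg_abs_le ρ, neg_abs_le E]
  have hg₂ : g ≤ 4 * μ := by
    rw [hg]
    nlinarith [le_abs_self ρ, le_abs_self E]
  obtain ⟨ha₁, -⟩ := abs_le.mp ha
  have hxp : 0 ≤ min (X + a) 1 := le_min (by linarith) zero_le_one
  refine ⟨hg₁, ?_⟩
  rw [abs_mul, abs_of_nonneg hxp]
  calc min (X + a) 1 * |g| ≤ 1 * |g| := by gcongr; exact min_le_right _ _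
    _ ≤ 4 * μ := by rw [one_mul, abs_le]; constructor <;> linarith

theorem coord_bound (hμ : 0 ≤ μ) (hX : 0 < X) (hc : c ≤ 1) (ha : |a| ≤ c)
    (hρE : |ρ| + |E| ≤ (1 - c) * μ)
    (hg : min X 1 * g = μ * (min X 1 / X) * (1 - min X 1 / X * a) + ρ + min X 1 * E) :
    -μ ≤ g ∧ |min (X + min X 1 * a) 1 * g| ≤ 4 * μ := by
  rcases le_or_gt X 1 with hX1 | hX1
  · rw [min_eq_left hX1, div_self hX.ne'] at *
    obtain ⟨hg₀, hbound⟩ := coord_bound_of_le_one (g := g) hμ hX hX1 hc ha hρE (by rw [hg]; ring)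
    exact ⟨by linarith, hbound⟩
  · rw [min_eq_right hX1.le] at *
    rw [one_mul] at hg ⊢
    exact coord_bound_of_one_lt hμ hX1 hc ha hρE (by rw [hg]; ring)

end CoordinateBound

theorem coord_bound_of_residual {n : ℕ} {H : Matrix (Fin n) (Fin n) ℝ} {x d g g' r e : Fin n → ℝ}
    {μ ε c : ℝ} (hμ : 0 < μ) (hε : 0 ≤ ε) (hx : ∀ i, 0 < x i) (hd : euclNorm d ≤ c)
    (hr : r =
      (Matrix.diagonal (fun i => min (x i) 1)
          * (H + μ • Matrix.diagonal (fun i => ((x i)^2)⁻¹))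
          * Matrix.diagonal (fun i => min (x i) 1)
        + (2 * ε) • (1 : Matrix (Fin n) (Fin n) ℝ)) *ᵥ d
      + (fun i => min (x i) 1 * (g i - μ / x i)))
    (hg' : g' = g + H *ᵥ (fun i => min (x i) 1 * d i) + e)
    (hbudget : euclNorm r + 2 * ε * euclNorm d + euclNorm e ≤ (1 - c) * μ) (i : Fin n) :
    -μ ≤ g' i ∧ |min (x i + min (x i) 1 * d i) 1 * g' i| ≤ 4 * μ := by
  have hc : c ≤ 1 := by
    have h : 0 ≤ (1 - c) * μ := by
      nlinarith [euclNorm_nonneg r, euclNorm_nonneg d, euclNorm_nonneg e]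
    linarith [nonneg_of_mul_nonneg_left h hμ]
  have hres := residual_apply H (fun i => min (x i) 1) x g d μ ε i
  rw [← hr] at hres
  refine coord_bound (ρ := r i - 2 * ε * d i) (E := e i) hμ.le (hx i) hc
    ((abs_le_euclNorm d i).trans hd) ?_ ?_
  · have h2ε : |2 * ε * d i| = 2 * ε * |d i| := by rw [abs_mul, abs_of_nonneg (by positivity)]
    calc |r i - 2 * ε * d i| + |e i| ≤ |r i| + |2 * ε * d i| + |e i| := by
          gcongr; exact abs_sub _ _
      _ ≤ euclNorm r + 2 * ε * euclNorm d + euclNorm e := by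
          rw [h2ε]; gcongr <;> exact abs_le_euclNorm _ _
      _ ≤ (1 - c) * μ := hbudget
  · rw [hg']
    simp only [Pi.add_apply]
    linear_combination -hres

theorem residual_budget {L ζ ε c δ : ℝ} (hL : 0 ≤ L) (hζ : 0 ≤ ζ) (hε : 0 < ε)
    (hc : c ≤ 1 / (2 * (L + 9/2 + ζ))) (hδ₀ : 0 ≤ δ) (hδ : δ < c * ε) :
    ζ * ε / 2 * δ + 2 * ε * δ + L * δ ^ 2 ≤ (1 - c) * (ε ^ 2 / 4) := by
  have hc₀ : 0 ≤ c := nonneg_of_mul_nonneg_left (hδ₀.trans hδ.le) hε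
  have hc₁ : c * (2 * L + 9 + 2 * ζ) ≤ 1 := by
    rw [le_div_iff₀ (by linarith)] at hc
    linarith
  have h2c : 2 * c ≤ 1 := by nlinarith [mul_nonneg hc₀ hL, mul_nonneg hc₀ hζ]
  have hLc : 4 * L * c ^ 2 ≤ 2 * L * c := by nlinarith [mul_nonneg hL hc₀]
  have hδε : δ * ε ≤ c * ε ^ 2 := by nlinarith
  have hδ2 : δ ^ 2 ≤ c ^ 2 * ε ^ 2 := by nlinarith
  nlinarith [mul_nonneg hζ hε.le, sq_nonneg ε, mul_nonneg hL (sq_nonneg ε)]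

theorem stmt8_general {n : ℕ}
    (gradf : (Fin n → ℝ) → (Fin n → ℝ))
    (hessf : (Fin n → ℝ) → Matrix (Fin n) (Fin n) ℝ)
    (hhess : ∀ y : Fin n → ℝ, HasFDerivAt gradf (mulVecCLM (hessf y)) y)
    (L_H : ℝ) (hLH : 0 < L_H)
    (hlip : ∀ y z : Fin n → ℝ, opNorm (hessf y - hessf z) ≤ L_H * euclNorm (y - z))
    (εg : ℝ) (hεg : εg ∈ Set.Ioo (0:ℝ) 1)
    (εH : ℝ) (hεH : εH = Real.sqrt εg)
    (μ : ℝ) (hμ : μ = εg / 4)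
    (ζbar : ℝ)
    (ζr : ℝ) (hζr : ζr ∈ Set.Ioo (0:ℝ) 1)
    (x : Fin n → ℝ) (hx : ∀ i, 0 < x i)
    (d : Fin n → ℝ)
    (rhat : Fin n → ℝ)
    (hrhat : rhat =
      (Matrix.diagonal (fun i => min (x i) 1)
          * (hessf x + μ • Matrix.diagonal (fun i => ((x i)^2)⁻¹))
          * Matrix.diagonal (fun i => min (x i) 1)
        + (2 * εH) • (1 : Matrix (Fin n) (Fin n) ℝ)) *ᵥ d
      + (fun i => min (x i) 1 * (gradf x i - μ / x i)))
    (hr2 : euclNorm rhat ≤ (ζr * εH / 2) * euclNorm d)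
    (xp : Fin n → ℝ) (hxp : xp = x + (fun i => min (x i) 1 * d i))
    (cd : ℝ)
    (hcd : cd = min (min ((1 - ζbar) / 9) (Real.sqrt (3 / (2 * L_H))))
      (1 / (2 * (L_H + 9/2 + ζr)))) :
    cd * εH ≤ euclNorm d ∨
      ((∀ i, -εg ≤ gradf xp i) ∧
        ‖(fun i => min (xp i) 1 * gradf xp i : Fin n → ℝ)‖ ≤ εg) := by
  rcases le_or_gt (cd * εH) (euclNorm d) with hd | hd
  · exact Or.inl hd
  right
  obtain ⟨hεg₀, hεg₁⟩ := hεg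
  have hεH₀ : 0 < εH := hεH ▸ Real.sqrt_pos.mpr hεg₀
  have hεH₁ : εH ≤ 1 := hεH ▸ Real.sqrt_le_one.mpr hεg₁.le
  have hμεH : μ = εH ^ 2 / 4 := by rw [hεH, Real.sq_sqrt hεg₀.le, hμ]
  have hcd₀ : 0 ≤ cd := nonneg_of_mul_nonneg_left ((euclNorm_nonneg d).trans hd.le) hεH₀
  set s : Fin n → ℝ := fun i => min (x i) 1 * d i
  set e := gradf (x + s) - gradf x - hessf x *ᵥ s with he
  have he_le : euclNorm e ≤ L_H * euclNorm d ^ 2 := by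
    have hs : euclNorm s ≤ euclNorm d := euclNorm_mul_le_of_abs_le_one fun i => by
      rw [abs_of_pos (lt_min (hx i) one_pos)]; exact min_le_right _ _
    exact (euclNorm_sub_sub_mulVec_le hhess hlip x s).trans (by gcongr; exact euclNorm_nonneg s)
  have hbudget : euclNorm rhat + 2 * εH * euclNorm d + euclNorm e ≤ (1 - cd) * μ :=
    calc _ ≤ ζr * εH / 2 * euclNorm d + 2 * εH * euclNorm d + L_H * euclNorm d ^ 2 := by
          gcongr
      _ ≤ (1 - cd) * μ := hμεH ▸ residual_budget hLH.le hζr.1.le hεH₀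
          (hcd ▸ min_le_right _ _) (euclNorm_nonneg d) hd
  have hcoord := coord_bound_of_residual (g' := gradf xp) (by linarith) hεH₀.le hx
    (hd.le.trans (mul_le_of_le_one_right hcd₀ hεH₁)) hrhat (by rw [hxp, he]; abel) hbudget
  subst hxp
  refine ⟨fun i => by linarith [(hcoord i).1], ?_⟩
  refine (pi_norm_le_iff_of_nonneg hεg₀.le).mpr fun i => ?_
  exact (Real.norm_eq_abs _).trans_le ((hcoord i).2.trans_eq (by rw [hμ]; ring))

/-- with `f` twice continuously differentiable, Hessian `L_H`-Lipschitz
in operator norm, tolerances `εg ∈ (0,1)`, `εH = √εg`, `μ = εg/4`, `ζ̄, ζ_r ∈ (0,1)`,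
`β ∈ [εH, 1)`, a point `x > 0`, and a direction `d` with `‖X⁻¹X̄d‖∞ < β`; if the residual
`r̂ = (X̄(∇²f(x) + μX⁻²)X̄ + 2εH I)d + X̄(∇f(x) − μX⁻¹e)` satisfies `‖r̂‖∞ ≤ ζ̄μ` and
`‖r̂‖ ≤ (ζ_r εH/2)‖d‖`, then with `x⁺ = x + X̄d` and
`c_d = min{(1−ζ̄)/9, (3/(2L_H))^{1/2}, 1/(2(L_H + 9/2 + ζ_r))}`, either `‖d‖ ≥ c_d εH`
or both `∇f(x⁺) ≥ −εg e` and `‖X̄⁺∇f(x⁺)‖∞ ≤ εg`. -/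
theorem stmt8 {n : ℕ}
    (f : (Fin n → ℝ) → ℝ)
    (gradf : (Fin n → ℝ) → (Fin n → ℝ))
    (hessf : (Fin n → ℝ) → Matrix (Fin n) (Fin n) ℝ)
    (hgrad : ∀ y : Fin n → ℝ, HasFDerivAt f (dotCLM (gradf y)) y)
    (hhess : ∀ y : Fin n → ℝ, HasFDerivAt gradf (mulVecCLM (hessf y)) y)
    (hhesscont : Continuous hessf)
    (L_H : ℝ) (hLH : 0 < L_H)
    (hlip : ∀ y z : Fin n → ℝ, opNorm (hessf y - hessf z) ≤ L_H * euclNorm (y - z))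
    (εg : ℝ) (hεg : εg ∈ Set.Ioo (0:ℝ) 1)
    (εH : ℝ) (hεH : εH = Real.sqrt εg)
    (μ : ℝ) (hμ : μ = εg / 4)
    (ζbar : ℝ) (hζbar : ζbar ∈ Set.Ioo (0:ℝ) 1)
    (ζr : ℝ) (hζr : ζr ∈ Set.Ioo (0:ℝ) 1)
    (β : ℝ) (hβ : β ∈ Set.Ico εH 1)
    (x : Fin n → ℝ) (hx : ∀ i, 0 < x i)
    (d : Fin n → ℝ)
    (hd : ‖(fun i => (min (x i) 1 / x i) * d i : Fin n → ℝ)‖ < β)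
    (rhat : Fin n → ℝ)
    (hrhat : rhat =
      (Matrix.diagonal (fun i => min (x i) 1)
          * (hessf x + μ • Matrix.diagonal (fun i => ((x i)^2)⁻¹))
          * Matrix.diagonal (fun i => min (x i) 1)
        + (2 * εH) • (1 : Matrix (Fin n) (Fin n) ℝ)) *ᵥ d
      + (fun i => min (x i) 1 * (gradf x i - μ / x i)))
    (hr1 : ‖rhat‖ ≤ ζbar * μ)
    (hr2 : euclNorm rhat ≤ (ζr * εH / 2) * euclNorm d)
    (xp : Fin n → ℝ) (hxp : xp = x + (fun i => min (x i) 1 * d i))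
    (cd : ℝ)
    (hcd : cd = min (min ((1 - ζbar) / 9) (Real.sqrt (3 / (2 * L_H))))
      (1 / (2 * (L_H + 9/2 + ζr)))) :
    cd * εH ≤ euclNorm d ∨
      ((∀ i, -εg ≤ gradf xp i) ∧
        ‖(fun i => min (xp i) 1 * gradf xp i : Fin n → ℝ)‖ ≤ εg) :=
  stmt8_general gradf hessf hhess L_H hLH hlip εg hεg εH hεH μ hμ ζbar ζr hζr x hx d rhat hrhat hr2
    xp hxp cd hcd
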